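/- arXiv:1808.06734 — 3 statements merged into one kernel-verified Lean document; each statement's English description precedes it below -/
import Mathlib

section
/- For every integer n ≥ 4, the fully active cop number of the cycle C_n equals 2. -/
open SimpleGraph

universe u v

variable {V : Type u}

/-- A configuration in the game of Cops and Robbers with `n` cops:
the positions of the cops together with the position of the robber. -/
abbrev CRConfig (V : Type u) (n : ℕ) : Type u := (Fin n → V) × V

/-- A strategy for `n` cops in the *fully active* game on `G`:
initial positions, together with a move function (which may depend on the
full history of the play and on the current configuration) under which
every cop moves to an adjacent vertex on every turn. -/
structure ActiveCopStrategy (G : SimpleGraph V) (n : ℕ) where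
  init : Fin n → V
  move : List (CRConfig V n) → CRConfig V n → Fin n → V
  move_adj : ∀ h c i, G.Adj (c.1 i) (move h c i)

/-- A strategy for the robber in the *fully active* game on `G`:
an initial position (chosen knowing the cops' initial positions),
together with a move function (which may depend on the full history and on
the current configuration, whose first component records the cops' newly
chosen positions) under which the robber moves to an adjacent vertex on
every turn. -/
structure ActiveRobberStrategy (G : SimpleGraph V) (n : ℕ) where
  init : (Fin n → V) → V
  move : List (CRConfig V n) → CRConfig V n → V
  move_adj : ∀ h c, G.Adj c.2 (move h c)

/-- A strategy for `n` cops in the *passive* (classical) game on `G`: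
on her turn, each cop either moves to an adjacent vertex or stays put. -/
structure PassiveCopStrategy (G : SimpleGraph V) (n : ℕ) where
  init : Fin n → V
  move : List (CRConfig V n) → CRConfig V n → Fin n → V
  move_adj : ∀ h c i, G.Adj (c.1 i) (move h c i) ∨ move h c i = c.1 i

/-- A strategy for the robber in the *passive* (classical) game on `G`:
on his turn the robber either moves to an adjacent vertex or stays put. -/
structure PassiveRobberStrategy (G : SimpleGraph V) (n : ℕ) where
  init : (Fin n → V) → V
  move : List (CRConfig V n) → CRConfig V n → V
  move_adj : ∀ h c, G.Adj c.2 (move h c) ∨ move h c = c.2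

/-- The play determined by (the data of) a cop strategy and a robber strategy:
`crPlay n cinit rinit cmove rmove t` is the pair consisting of the history of
configurations strictly before round `t` and the configuration after round `t`
(a round consists of a cop move followed by a robber move; round `0` is the
initial placement, cops first, then the robber). -/
def crPlay (n : ℕ) (cinit : Fin n → V) (rinit : (Fin n → V) → V)
    (cmove : List (CRConfig V n) → CRConfig V n → Fin n → V)
    (rmove : List (CRConfig V n) → CRConfig V n → V) :
    ℕ → List (CRConfig V n) × CRConfig V n
  | 0 => ([], (cinit, rinit cinit))
  | t + 1 =>
      let p := crPlay n cinit rinit cmove rmove t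
      let c' := cmove p.1 p.2
      (p.1 ++ [p.2], (c', rmove p.1 (c', p.2.2)))

/-- The cops capture the robber in the given play: at some point of the play
(either right after a robber move, or right after a cop move) some cop
occupies the robber's vertex. -/
def crCaptures (n : ℕ) (cinit : Fin n → V) (rinit : (Fin n → V) → V)
    (cmove : List (CRConfig V n) → CRConfig V n → Fin n → V)
    (rmove : List (CRConfig V n) → CRConfig V n → V) : Prop :=
  ∃ t : ℕ,
    (∃ i, (crPlay n cinit rinit cmove rmove t).2.1 i
        = (crPlay n cinit rinit cmove rmove t).2.2) ∨
    (∃ i, cmove (crPlay n cinit rinit cmove rmove t).1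
            (crPlay n cinit rinit cmove rmove t).2 i
        = (crPlay n cinit rinit cmove rmove t).2.2)

/-- In the fully active game, the given cop strategy captures the robber
playing the given strategy. -/
def ActiveCapture {G : SimpleGraph V} {n : ℕ} (cs : ActiveCopStrategy G n)
    (rs : ActiveRobberStrategy G n) : Prop :=
  crCaptures n cs.init rs.init cs.move rs.move

/-- In the passive game, the given cop strategy captures the robber
playing the given strategy. -/
def PassiveCapture {G : SimpleGraph V} {n : ℕ} (cs : PassiveCopStrategy G n)
    (rs : PassiveRobberStrategy G n) : Prop :=
  crCaptures n cs.init rs.init cs.move rs.move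

/-- `n` cops have a winning strategy in the fully active game on `G`. -/
def ActiveCopsWin (G : SimpleGraph V) (n : ℕ) : Prop :=
  ∃ cs : ActiveCopStrategy G n, ∀ rs : ActiveRobberStrategy G n, ActiveCapture cs rs

/-- `n` cops have a winning strategy in the passive (classical) game on `G`. -/
def PassiveCopsWin (G : SimpleGraph V) (n : ℕ) : Prop :=
  ∃ cs : PassiveCopStrategy G n, ∀ rs : PassiveRobberStrategy G n, PassiveCapture cs rs

/-- The fully active cop number of `G`. -/
noncomputable def acop (G : SimpleGraph V) : ℕ := sInf {n | ActiveCopsWin G n}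

/-- The (classical, passive) cop number of `G`. -/
noncomputable def copNumber (G : SimpleGraph V) : ℕ := sInf {n | PassiveCopsWin G n}

/-!
One cop loses on `C_n` for `n ≥ 4`: the robber keeps standing two steps ahead of the cop. Rotation
is an automorphism of the cycle, so every cop move can be answered by the rotated move, and for
`n ≥ 4` the vertex two steps ahead is neither the cop's vertex nor adjacent to it.

Two cops win: they start together and walk around the cycle in opposite directions. The robber
can never jump over a cop, so he stays on the arc between them, which loses two vertices per
round until it is empty.
-/

section Play

variable {k : ℕ} {cinit : Fin k → V} {rinit : (Fin k → V) → V}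
  {cmove : List (CRConfig V k) → CRConfig V k → Fin k → V}
  {rmove : List (CRConfig V k) → CRConfig V k → V}

lemma crPlay_succ_cops (t : ℕ) : (crPlay k cinit rinit cmove rmove (t + 1)).2.1
    = cmove (crPlay k cinit rinit cmove rmove t).1 (crPlay k cinit rinit cmove rmove t).2 :=
  rfl

lemma crPlay_succ_robber (t : ℕ) : (crPlay k cinit rinit cmove rmove (t + 1)).2.2
    = rmove (crPlay k cinit rinit cmove rmove t).1
        ((crPlay k cinit rinit cmove rmove (t + 1)).2.1,
          (crPlay k cinit rinit cmove rmove t).2.2) :=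
  rfl

end Play

section Strategies

variable {G : SimpleGraph V} {k : ℕ}

lemma ActiveRobberStrategy.adj_crPlay_succ (rs : ActiveRobberStrategy G k)
    (cs : ActiveCopStrategy G k) (t : ℕ) :
    G.Adj (crPlay k cs.init rs.init cs.move rs.move t).2.2
      (crPlay k cs.init rs.init cs.move rs.move (t + 1)).2.2 :=
  rs.move_adj _ ((crPlay k cs.init rs.init cs.move rs.move (t + 1)).2.1, _)

lemma acop_eq_of_activeCopsWin (hk : ActiveCopsWin G k) (hlt : ∀ j < k, ¬ ActiveCopsWin G j) :
    acop G = k :=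
  le_antisymm (Nat.sInf_le hk) (le_csInf ⟨k, hk⟩ fun j hj => not_lt.1 fun hjk => hlt j hjk hj)

open Classical in
noncomputable def ActiveRobberStrategy.ofTarget (hG : ∀ v, ∃ w, G.Adj v w)
    (init : (Fin k → V) → V) (target : CRConfig V k → V) : ActiveRobberStrategy G k where
  init := init
  move _ c := if G.Adj c.2 (target c) then target c else (hG c.2).choose
  move_adj _ c := by
    split_ifs with h
    exacts [h, (hG c.2).choose_spec]

lemma ActiveRobberStrategy.ofTarget_move (hG : ∀ v, ∃ w, G.Adj v w)
    {init : (Fin k → V) → V} {target : CRConfig V k → V} (h : List (CRConfig V k))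
    {c : CRConfig V k} (hc : G.Adj c.2 (target c)) :
    (ActiveRobberStrategy.ofTarget hG init target).move h c = target c :=
  if_pos hc

lemma not_activeCopsWin_zero [Nonempty V] (hG : ∀ v, ∃ w, G.Adj v w) :
    ¬ ActiveCopsWin G 0 := by
  rintro ⟨cs, hcs⟩
  obtain ⟨t, ⟨i, -⟩ | ⟨i, -⟩⟩ :=
    hcs (.ofTarget hG (fun _ => Classical.arbitrary V) Prod.snd)
  all_goals exact i.elim0

theorem not_activeCopsWin_one_of_hom (hG : ∀ v, ∃ w, G.Adj v w) (φ : G →g G)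
    (hne : ∀ v, φ v ≠ v) (hnadj : ∀ v, ¬ G.Adj v (φ v)) : ¬ ActiveCopsWin G 1 := by
  rintro ⟨cs, hcs⟩
  let rs : ActiveRobberStrategy G 1 := .ofTarget hG (fun c => φ (c 0)) (fun c => φ (c.1 0))
  have shadow : ∀ t, (crPlay 1 cs.init rs.init cs.move rs.move t).2.2
      = φ ((crPlay 1 cs.init rs.init cs.move rs.move t).2.1 0) := by
    intro t
    induction t with
    | zero => rfl
    | succ t ih =>
      rw [crPlay_succ_robber, crPlay_succ_cops]
      refine ActiveRobberStrategy.ofTarget_move hG _ ?_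
      rw [ih]
      exact φ.map_adj (cs.move_adj _ _ 0)
  obtain ⟨t, ⟨i, hi⟩ | ⟨i, hi⟩⟩ := hcs rs
  · rw [Subsingleton.elim i 0, shadow] at hi
    exact hne _ hi.symm
  · rw [Subsingleton.elim i 0, shadow] at hi
    exact hnadj _ (hi ▸ cs.move_adj _ _ 0)

end Strategies

open Fin.NatCast in
lemma Fin.val_ne_of_natCast_ne {N : ℕ} [NeZero N] {r : Fin N} {s : ℕ} (h : (s : Fin N) ≠ r) :
    r.val ≠ s := by
  rintro rfl
  exact h (Fin.cast_val_eq_self r)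

open Fin.NatCast in
lemma Fin.val_add_ne_of_neg_natCast_ne {N : ℕ} [NeZero N] {r : Fin N} {s : ℕ}
    (h : -(s : Fin N) ≠ r) : r.val + s ≠ N := by
  intro hrs
  refine h (neg_eq_of_add_eq_zero_left ?_)
  rw [← Fin.cast_val_eq_self r, ← Nat.cast_add, hrs, Fin.natCast_self]

namespace SimpleGraph

lemma cycleGraph_adj_add_one (n : ℕ) (v : Fin (n + 2)) : (cycleGraph (n + 2)).Adj v (v + 1) := by
  simp [cycleGraph_adj]

lemma cycleGraph_exists_adj (n : ℕ) (v : Fin (n + 2)) : ∃ w, (cycleGraph (n + 2)).Adj v w :=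
  ⟨v + 1, cycleGraph_adj_add_one n v⟩

lemma cycleGraph_adj_sub_one (n : ℕ) (v : Fin (n + 2)) : (cycleGraph (n + 2)).Adj v (v - 1) := by
  simp [cycleGraph_adj]

lemma cycleGraph_not_adj_add_two (n : ℕ) (v : Fin (n + 4)) :
    ¬ (cycleGraph (n + 4)).Adj v (v + 2) := by
  rw [cycleGraph_adj, sub_add_cancel_left, add_sub_cancel_left, neg_eq_iff_add_eq_zero]
  simp [Fin.ext_iff, Fin.val_add, Nat.mod_eq_of_lt]

lemma cycleGraph_val_of_adj {n : ℕ} {u v : Fin (n + 2)} (h : (cycleGraph (n + 2)).Adj u v)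
    (h0 : 0 < u.val) (hlt : u.val + 1 < n + 2) : v.val = u.val + 1 ∨ v.val + 1 = u.val := by
  rw [← mem_neighborSet, cycleGraph_neighborSet] at h
  rcases h with rfl | rfl
  · right
    rw [Fin.coe_sub_one, if_neg (by rintro rfl; simp at h0)]
    omega
  · left
    rw [Fin.val_add_one, if_neg (by rintro rfl; simp at hlt)]

@[simps]
def cycleGraph.addRight (n : ℕ) (a : Fin (n + 2)) :
    cycleGraph (n + 2) →g cycleGraph (n + 2) where
  toFun v := v + a
  map_rel' := by simp [cycleGraph_adj]

end SimpleGraph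

lemma not_activeCopsWin_one_cycleGraph (n : ℕ) : ¬ ActiveCopsWin (cycleGraph (n + 4)) 1 :=
  not_activeCopsWin_one_of_hom (cycleGraph_exists_adj (n + 2))
    (cycleGraph.addRight (n + 2) 2) (fun v => by simp [Fin.ext_iff, Nat.mod_eq_of_lt])
    (cycleGraph_not_adj_add_two n)

def sweepCops (n : ℕ) : ActiveCopStrategy (cycleGraph (n + 2)) 2 where
  init _ := 0
  move _ c := ![c.1 0 + 1, c.1 1 - 1]
  move_adj _ c i := by
    fin_cases i
    exacts [cycleGraph_adj_add_one n _, cycleGraph_adj_sub_one n _]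

lemma sweepCops_move (n : ℕ) (h : List (CRConfig (Fin (n + 2)) 2))
    (c : CRConfig (Fin (n + 2)) 2) :
    (sweepCops n).move h c = ![c.1 0 + 1, c.1 1 - 1] :=
  rfl

open Fin.NatCast in
lemma sweepCops_positions (n : ℕ) {rinit : (Fin 2 → Fin (n + 2)) → Fin (n + 2)}
    {rmove : List (CRConfig (Fin (n + 2)) 2) → CRConfig (Fin (n + 2)) 2 → Fin (n + 2)}
    (t : ℕ) :
    (crPlay 2 (sweepCops n).init rinit (sweepCops n).move rmove t).2.1
      = ![((t : ℕ) : Fin (n + 2)), -(t : Fin (n + 2))] := by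
  induction t with
  | zero => funext i; fin_cases i <;> simp [crPlay, sweepCops]
  | succ t ih =>
    rw [crPlay_succ_cops, sweepCops_move, ih]
    funext i; fin_cases i <;> simp [sub_eq_add_neg, add_comm]

open Fin.NatCast in
theorem activeCopsWin_cycleGraph_two (n : ℕ) : ActiveCopsWin (cycleGraph (n + 2)) 2 := by
  refine ⟨sweepCops n, fun rs => ?_⟩
  by_contra hfree
  simp only [ActiveCapture, crCaptures, not_exists, not_or] at hfree
  set play := crPlay 2 (sweepCops n).init rs.init (sweepCops n).move rs.move
  have away : ∀ s (r : Fin (n + 2)), (∀ i, (play s).2.1 i ≠ r) →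
      r.val ≠ s ∧ r.val + s ≠ n + 2 :=
    fun s r h => by
      rw [sweepCops_positions] at h
      exact ⟨Fin.val_ne_of_natCast_ne (h 0), Fin.val_add_ne_of_neg_natCast_ne (h 1)⟩
  have trapped : ∀ t, t < (play t).2.2.val ∧ (play t).2.2.val + t < n + 2 := by
    intro t
    induction t with
    | zero =>
      have := away 0 _ (hfree 0).1
      omega
    | succ t ih =>
      -- the cops' move from time `t` takes them to their positions at time `t + 1`
      have before := away (t + 1) _ (hfree t).2
      have after := away (t + 1) _ (hfree (t + 1)).1
      have hadj : (cycleGraph (n + 2)).Adj (play t).2.2 (play (t + 1)).2.2 :=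
        rs.adj_crPlay_succ (sweepCops n) t
      have step := cycleGraph_val_of_adj hadj (by omega) (by omega)
      omega
  have := trapped (n + 2)
  omega

/-- For every integer `n ≥ 4`, the fully active cop number of the cycle `C_n`
equals `2`. -/
theorem acop_cycleGraph (n : ℕ) (hn : 4 ≤ n) :
    acop (SimpleGraph.cycleGraph n) = 2 := by
  obtain ⟨m, rfl⟩ : ∃ m, n = m + 4 := ⟨n - 4, by omega⟩
  refine acop_eq_of_activeCopsWin (activeCopsWin_cycleGraph_two (m + 2)) fun j hj => ?_
  interval_cases j
  · exact not_activeCopsWin_zero (cycleGraph_exists_adj (m + 2))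
  · exact not_activeCopsWin_one_cycleGraph m
end

section
/- For every finite connected graph G, acop(G) ≤ 2·cop(G). -/
open SimpleGraph

universe u v

variable {V : Type u}

/-!
Each cop of a winning passive strategy is shadowed by two active cops who stay adjacent to each
other, one of them always standing on the passive cop's vertex: when the passive cop moves, the
active cop on her vertex follows her and the other one steps onto the vacated vertex; when she
stays put, the two swap places. The active cops run the passive strategy online against the
robber's actual walk, which is also a legal walk in the passive game, so a passive capture is an
active capture. If some vertex is isolated, the active robber has no legal strategy at all.
-/

section Play

variable {n : ℕ} (ci : Fin n → V) (ri : (Fin n → V) → V)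
  (cm : List (CRConfig V n) → CRConfig V n → Fin n → V)
  (rm : List (CRConfig V n) → CRConfig V n → V)

theorem crPlay_fst_map_snd (t : ℕ) :
    (crPlay n ci ri cm rm t).1.map Prod.snd
      = (List.range t).map fun s => (crPlay n ci ri cm rm s).2.2 := by
  induction t with
  | zero => rfl
  | succ t ih => simp [crPlay, ih, List.range_succ]

theorem crPlay_fst_length (t : ℕ) : (crPlay n ci ri cm rm t).1.length = t := by
  simpa using congrArg List.length (crPlay_fst_map_snd ci ri cm rm t)

end Play

section Pair

variable {G : SimpleGraph V} [DecidableEq V]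

def guardStep (p p' : V) (xy : V × V) : V × V :=
  if p' = p then xy.swap else if xy.1 = p then (p', p) else (p, p')

def Guards (G : SimpleGraph V) (p : V) (xy : V × V) : Prop :=
  G.Adj xy.1 xy.2 ∧ (xy.1 = p ∨ xy.2 = p)

theorem guards_guardStep {p p' : V} {xy : V × V} (h : Guards G p xy)
    (hp : G.Adj p p' ∨ p' = p) : Guards G p' (guardStep p p' xy) := by
  obtain ⟨x, y⟩ := xy
  obtain ⟨hxy, rfl | rfl⟩ := h <;> unfold guardStep Guards <;> split_ifs <;>
    grind [SimpleGraph.Adj.symm]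

theorem adj_guardStep {p p' : V} {xy : V × V} (h : Guards G p xy)
    (hp : G.Adj p p' ∨ p' = p) :
    G.Adj xy.1 (guardStep p p' xy).1 ∧ G.Adj xy.2 (guardStep p p' xy).2 := by
  obtain ⟨x, y⟩ := xy
  obtain ⟨hxy, rfl | rfl⟩ := h <;> unfold guardStep <;> split_ifs <;>
    grind [SimpleGraph.Adj.symm]

end Pair

section Unpair

variable {n : ℕ}

def unpair (s : Fin n → V × V) (j : Fin (2 * n)) : V :=
  let ki := finProdFinEquiv.symm j
  if ki.1 = 0 then (s ki.2).1 else (s ki.2).2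

theorem adj_unpair {G : SimpleGraph V} {s s' : Fin n → V × V}
    (h : ∀ i, G.Adj (s i).1 (s' i).1 ∧ G.Adj (s i).2 (s' i).2) (j : Fin (2 * n)) :
    G.Adj (unpair s j) (unpair s' j) := by
  dsimp only [unpair]
  split_ifs
  exacts [(h _).1, (h _).2]

theorem exists_unpair_eq {s : Fin n → V × V} {i : Fin n} {v : V}
    (h : (s i).1 = v ∨ (s i).2 = v) : ∃ j, unpair s j = v := by
  rcases h with h | h
  · exact ⟨finProdFinEquiv (0, i), by simpa [unpair] using h⟩
  · exact ⟨finProdFinEquiv (1, i), by simpa [unpair] using h⟩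

end Unpair

/-- Cops standing on `pos l` once the robber has visited `l` catch the robber walking along `r`. -/
def CatchesWalk {k : ℕ} (pos : List V → Fin k → V) (r : ℕ → V) : Prop :=
  ∃ t, (∃ i, pos ((List.range t).map r) i = r t) ∨
    ∃ i, pos ((List.range (t + 1)).map r) i = r t

theorem CatchesWalk.mono {k k' : ℕ} {pos : List V → Fin k → V} {pos' : List V → Fin k' → V}
    {r : ℕ → V} (h : CatchesWalk pos r) (hpos : ∀ l i, ∃ j, pos' l j = pos l i) :
    CatchesWalk pos' r := by
  obtain ⟨t, ⟨i, hi⟩ | ⟨i, hi⟩⟩ := h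
  · obtain ⟨j, hj⟩ := hpos ((List.range t).map r) i
    exact ⟨t, .inl ⟨j, hj.trans hi⟩⟩
  · obtain ⟨j, hj⟩ := hpos ((List.range (t + 1)).map r) i
    exact ⟨t, .inr ⟨j, hj.trans hi⟩⟩

section Schedule

variable {G : SimpleGraph V} {m : ℕ}

def robberWalk (cs : ActiveCopStrategy G m) (rs : ActiveRobberStrategy G m) (t : ℕ) : V :=
  (crPlay m cs.init rs.init cs.move rs.move t).2.2

theorem adj_robberWalk (cs : ActiveCopStrategy G m) (rs : ActiveRobberStrategy G m) (t : ℕ) :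
    G.Adj (robberWalk cs rs t) (robberWalk cs rs (t + 1)) :=
  let p := crPlay m cs.init rs.init cs.move rs.move t
  rs.move_adj p.1 (cs.move p.1 p.2, p.2.2)

variable [DecidableEq V]

/-- The fallback `nb ∘ c.1` is never played; it only makes the moves legal off schedule. -/
def ActiveCopStrategy.ofSchedule (pos : List V → Fin m → V)
    (hpos : ∀ l v j, G.Adj (pos l j) (pos (l ++ [v]) j))
    (nb : V → V) (hnb : ∀ v, G.Adj v (nb v)) : ActiveCopStrategy G m where
  init := pos []
  move h c := if c.1 = pos (h.map Prod.snd) then pos (h.map Prod.snd ++ [c.2]) else nb ∘ c.1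
  move_adj h c j := by
    split_ifs with hc
    · rw [hc]
      exact hpos _ _ _
    · exact hnb _

variable {pos : List V → Fin m → V} {hpos : ∀ l v j, G.Adj (pos l j) (pos (l ++ [v]) j)}
  {nb : V → V} {hnb : ∀ v, G.Adj v (nb v)}

theorem ActiveCopStrategy.ofSchedule_play (rs : ActiveRobberStrategy G m) (t : ℕ) :
    let cs := ofSchedule pos hpos nb hnb
    (crPlay m cs.init rs.init cs.move rs.move t).2.1
      = pos ((crPlay m cs.init rs.init cs.move rs.move t).1.map Prod.snd) := by
  induction t with
  | zero => rfl
  | succ t ih =>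
    simp only [crPlay, List.map_append, List.map_cons, List.map_nil]
    exact if_pos ih

theorem ActiveCopStrategy.activeCapture_ofSchedule (rs : ActiveRobberStrategy G m)
    (h : CatchesWalk pos (robberWalk (ofSchedule pos hpos nb hnb) rs)) :
    ActiveCapture (ofSchedule pos hpos nb hnb) rs := by
  set cs := ofSchedule pos hpos nb hnb
  set r := robberWalk cs rs
  obtain ⟨t, hcatch⟩ := h
  have hhist : (crPlay m cs.init rs.init cs.move rs.move t).1.map Prod.snd
      = (List.range t).map r :=
    crPlay_fst_map_snd ..
  have hcops : (crPlay m cs.init rs.init cs.move rs.move t).2.1 = pos ((List.range t).map r) :=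
    (ofSchedule_play rs t).trans (congrArg pos hhist)
  have hmove : cs.move (crPlay m cs.init rs.init cs.move rs.move t).1
      (crPlay m cs.init rs.init cs.move rs.move t).2 = pos ((List.range (t + 1)).map r) := by
    rw [List.range_succ, List.map_append, List.map_singleton, ← hhist]
    exact if_pos (ofSchedule_play rs t)
  refine ⟨t, ?_⟩
  rw [hcops, hmove]
  exact hcatch

end Schedule

section Simulation

variable {G : SimpleGraph V} [DecidableEq V] {n : ℕ}

/-- The state the active cops maintain: the passive play they simulate, and their own pairs. -/
structure SimState (V : Type u) (n : ℕ) where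
  hist : List (CRConfig V n)
  cops : Fin n → V
  pairs : Fin n → V × V

def SimState.init (cs : PassiveCopStrategy G n) (nb : V → V) : SimState V n :=
  ⟨[], cs.init, fun i => (cs.init i, nb (cs.init i))⟩

def SimState.step (cs : PassiveCopStrategy G n) (s : SimState V n) (v : V) : SimState V n :=
  let cops := cs.move s.hist (s.cops, v)
  ⟨s.hist ++ [(s.cops, v)], cops, fun i => guardStep (s.cops i) (cops i) (s.pairs i)⟩

def simulate (cs : PassiveCopStrategy G n) (nb : V → V) (l : List V) : SimState V n :=
  l.foldl (SimState.step cs) (SimState.init cs nb)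

variable (cs : PassiveCopStrategy G n) {nb : V → V}

theorem simulate_append_singleton (l : List V) (v : V) :
    simulate cs nb (l ++ [v]) = (simulate cs nb l).step cs v :=
  List.foldl_append ..

theorem guards_simulate (hnb : ∀ v, G.Adj v (nb v)) (l : List V) (i : Fin n) :
    Guards G ((simulate cs nb l).cops i) ((simulate cs nb l).pairs i) := by
  induction l using List.reverseRecOn with
  | nil => exact ⟨hnb _, .inl rfl⟩
  | append_singleton l v ih =>
    rw [simulate_append_singleton]
    exact guards_guardStep ih
      (cs.move_adj (simulate cs nb l).hist ((simulate cs nb l).cops, v) i)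

def pairSchedule (nb : V → V) (l : List V) : Fin (2 * n) → V :=
  unpair (simulate cs nb l).pairs

theorem adj_pairSchedule (hnb : ∀ v, G.Adj v (nb v)) (l : List V) (v : V) (j : Fin (2 * n)) :
    G.Adj (pairSchedule cs nb l j) (pairSchedule cs nb (l ++ [v]) j) := by
  refine adj_unpair (fun i => ?_) j
  rw [simulate_append_singleton]
  exact adj_guardStep (guards_simulate cs hnb l i)
    (cs.move_adj (simulate cs nb l).hist ((simulate cs nb l).cops, v) i)

theorem exists_pairSchedule_eq (hnb : ∀ v, G.Adj v (nb v)) (l : List V) (i : Fin n) :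
    ∃ j, pairSchedule cs nb l j = (simulate cs nb l).cops i :=
  exists_unpair_eq (guards_simulate cs hnb l i).2

end Simulation

section Follow

variable {G : SimpleGraph V} [DecidableRel G.Adj] {n : ℕ}

@[simps]
def PassiveRobberStrategy.follow (r : ℕ → V) : PassiveRobberStrategy G n where
  init _ := r 0
  move h c := if G.Adj c.2 (r (h.length + 1)) then r (h.length + 1) else c.2
  move_adj h c := by
    split_ifs with hadj
    exacts [.inl hadj, .inr rfl]

variable [DecidableEq V] (cs : PassiveCopStrategy G n) (nb : V → V) {r : ℕ → V}

theorem crPlay_follow (hr : ∀ t, G.Adj (r t) (r (t + 1))) (t : ℕ) :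
    crPlay n cs.init (PassiveRobberStrategy.follow (G := G) r).init cs.move
        (PassiveRobberStrategy.follow (G := G) r).move t
      = ((simulate cs nb ((List.range t).map r)).hist,
          ((simulate cs nb ((List.range t).map r)).cops, r t)) := by
  induction t with
  | zero => rfl
  | succ t ih =>
    have hlen := crPlay_fst_length cs.init (PassiveRobberStrategy.follow (G := G) r).init cs.move
      (PassiveRobberStrategy.follow (G := G) r).move t
    rw [List.range_succ, List.map_append, List.map_singleton, simulate_append_singleton]
    simp only [crPlay, PassiveRobberStrategy.follow_move, hlen]
    rw [ih]
    simp [hr t, SimState.step]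

theorem catchesWalk_of_passiveCapture (hr : ∀ t, G.Adj (r t) (r (t + 1)))
    (h : PassiveCapture cs (PassiveRobberStrategy.follow (G := G) r)) :
    CatchesWalk (fun l => (simulate cs nb l).cops) r := by
  obtain ⟨t, ht⟩ := h
  rw [crPlay_follow cs nb hr t] at ht
  refine ⟨t, ?_⟩
  dsimp only
  rw [List.range_succ, List.map_append, List.map_singleton, simulate_append_singleton]
  exact ht

end Follow

theorem activeCopsWin_two_mul {G : SimpleGraph V} {n : ℕ} (hG : ∀ v, ∃ w, G.Adj v w)
    (h : PassiveCopsWin G n) : ActiveCopsWin G (2 * n) := by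
  classical
  choose nb hnb using hG
  obtain ⟨cs, hcs⟩ := h
  refine ⟨.ofSchedule (pairSchedule cs nb) (adj_pairSchedule cs hnb) nb hnb, fun rs => ?_⟩
  refine ActiveCopStrategy.activeCapture_ofSchedule rs (CatchesWalk.mono ?_
    (exists_pairSchedule_eq cs hnb))
  exact catchesWalk_of_passiveCapture cs nb (adj_robberWalk _ rs) (hcs _)

theorem activeCopsWin_zero_of_isolated {G : SimpleGraph V} {v : V} (hv : ∀ w, ¬ G.Adj v w) :
    ActiveCopsWin G 0 :=
  ⟨⟨Fin.elim0, fun _ _ => Fin.elim0, fun _ _ i => i.elim0⟩,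
    fun rs => (hv _ (rs.move_adj [] (Fin.elim0, v))).elim⟩

theorem passiveCopsWin_card [Fintype V] (G : SimpleGraph V) : PassiveCopsWin G (Fintype.card V) :=
  ⟨⟨(Fintype.equivFin V).symm, fun _ c => c.1, fun _ _ _ => .inr rfl⟩,
    fun rs => ⟨0, .inl ⟨Fintype.equivFin V (rs.init (Fintype.equivFin V).symm),
      Equiv.symm_apply_apply _ _⟩⟩⟩

theorem acop_le_two_mul_copNumber_general {V : Type u} [Fintype V]
    (G : SimpleGraph V) :
    acop G ≤ 2 * copNumber G := by
  by_cases hG : ∀ v, ∃ w, G.Adj v w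
  · have hcop : PassiveCopsWin G (copNumber G) :=
      Nat.sInf_mem (s := {n | PassiveCopsWin G n}) ⟨_, passiveCopsWin_card G⟩
    exact Nat.sInf_le (activeCopsWin_two_mul hG hcop)
  · obtain ⟨v, hv⟩ := not_forall.mp hG
    exact (Nat.sInf_le (activeCopsWin_zero_of_isolated (not_exists.mp hv))).trans (Nat.zero_le _)

/-- For every finite connected graph `G`, `acop(G) ≤ 2 ⬝ cop(G)`. -/
theorem acop_le_two_mul_copNumber {V : Type u} [Fintype V]
    (G : SimpleGraph V) (hconn : G.Connected) :
    acop G ≤ 2 * copNumber G :=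
  acop_le_two_mul_copNumber_general G
end

section
/- For every finite connected graph G, cop(G) ≤ acop(G) + 1. -/
open SimpleGraph

universe u v

variable {V : Type u}

open scoped Classical

section Aux


/-!
`m + 1` cops win the passive game on a connected graph whenever `m` cops win the fully active
one. The first `m` cops replay the active strategy against the *moves* of the robber, skipping
the rounds in which he stays put: in such a round their target does not change and they have
already reached it, so they stay put too. If the robber moves only finitely often, the last cop
walks along shortest paths to his final vertex. Otherwise the robber's successive moves are the
moves of an active robber, whom the active strategy catches, and the capture happens at the
corresponding time of the passive game as well. Finiteness only serves to make `acop G` a number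
of cops that wins: one cop on every vertex wins the active game, unless some vertex is isolated,
in which case no active robber exists at all.
-/

open scoped Classical

namespace SimpleGraph

variable {G : SimpleGraph V} {u v : V}

lemma Reachable.exists_adj_dist_lt (h : G.Reachable u v) (hne : u ≠ v) :
    ∃ w, G.Adj u w ∧ G.dist w v < G.dist u v := by
  obtain ⟨p, hp⟩ :=
    exists_walk_of_dist_ne_zero (dist_ne_zero_iff_ne_and_reachable.2 ⟨hne, h⟩)
  cases p with
  | nil => exact absurd rfl hne
  | cons hadj q =>
    rw [Walk.length_cons] at hp
    exact ⟨_, hadj, by have := dist_le q; omega⟩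

variable (G) in
noncomputable def stepToward (u v : V) : V :=
  if h : ∃ w, G.Adj u w ∧ G.dist w v < G.dist u v then h.choose else u

lemma stepToward_adj_or_eq (u v : V) : G.Adj u (G.stepToward u v) ∨ G.stepToward u v = u := by
  unfold stepToward
  split_ifs with h
  exacts [Or.inl h.choose_spec.1, Or.inr rfl]

lemma Reachable.dist_stepToward_lt (h : G.Reachable u v) (hne : u ≠ v) :
    G.dist (G.stepToward u v) v < G.dist u v := by
  have hex := h.exists_adj_dist_lt hne
  rw [stepToward, dif_pos hex]
  exact hex.choose_spec.2

lemma stepToward_self (v : V) : G.stepToward v v = v := by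
  simp [stepToward]

lemma Adj.stepToward_eq (h : G.Adj u v) : G.stepToward u v = v := by
  have hex : ∃ w, G.Adj u w ∧ G.dist w v < G.dist u v :=
    ⟨v, h, by rw [dist_self, dist_eq_one_iff_adj.2 h]; exact Nat.one_pos⟩
  obtain ⟨hadj, hlt⟩ := hex.choose_spec
  have hlt : G.dist hex.choose v = 0 := by have := dist_eq_one_iff_adj.2 h; omega
  rw [stepToward, dif_pos hex]
  exact ((hadj.symm.reachable.trans h.reachable).dist_eq_zero_iff).1 hlt

lemma stepToward_eq_of_adj_or_eq (h : G.Adj u v ∨ v = u) : G.stepToward u v = v := by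
  rcases h with h | rfl
  exacts [h.stepToward_eq, stepToward_self v]

lemma Connected.exists_eq_of_stepToward (hconn : G.Connected) {c : ℕ → V} {x : V} {T : ℕ}
    (hc : ∀ t ≥ T, c (t + 1) = G.stepToward (c t) x) : ∃ t ≥ T, c t = x := by
  suffices ∀ d, ∀ t ≥ T, G.dist (c t) x = d → ∃ t ≥ T, c t = x from this _ T le_rfl rfl
  intro d
  induction d using Nat.strong_induction_on with
  | _ d ih =>
    intro t ht hd
    by_cases hx : c t = x
    · exact ⟨t, ht, hx⟩
    · refine ih _ ?_ (t + 1) (by omega) rfl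
      rw [← hd, hc t ht]
      exact (hconn _ x).dist_stepToward_lt hx

end SimpleGraph

section Play

variable {G : SimpleGraph V} {n : ℕ}

lemma crPlay_fst_map_snd_s7 (cinit : Fin n → V) (rinit : (Fin n → V) → V)
    (cmove : List (CRConfig V n) → CRConfig V n → Fin n → V)
    (rmove : List (CRConfig V n) → CRConfig V n → V) (t : ℕ) :
    (crPlay n cinit rinit cmove rmove t).1.map Prod.snd =
      (List.range t).map fun j => (crPlay n cinit rinit cmove rmove j).2.2 := by
  induction t with
  | zero => rfl
  | succ t ih => simp [crPlay, List.range_succ, ih]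

lemma crPlay_fst_length_s7 (cinit : Fin n → V) (rinit : (Fin n → V) → V)
    (cmove : List (CRConfig V n) → CRConfig V n → Fin n → V)
    (rmove : List (CRConfig V n) → CRConfig V n → V) (t : ℕ) :
    (crPlay n cinit rinit cmove rmove t).1.length = t := by
  simpa using congrArg List.length (crPlay_fst_map_snd_s7 cinit rinit cmove rmove t)

def ActiveCopStrategy.play (cs : ActiveCopStrategy G n) (rs : ActiveRobberStrategy G n) :
    ℕ → List (CRConfig V n) × CRConfig V n :=
  crPlay n cs.init rs.init cs.move rs.move

lemma ActiveCopStrategy.play_succ (cs : ActiveCopStrategy G n) (rs : ActiveRobberStrategy G n)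
    (t : ℕ) :
    cs.play rs (t + 1) =
      ((cs.play rs t).1 ++ [(cs.play rs t).2], (cs.move (cs.play rs t).1 (cs.play rs t).2,
        rs.move (cs.play rs t).1
          (cs.move (cs.play rs t).1 (cs.play rs t).2, (cs.play rs t).2.2))) :=
  rfl

def PassiveCopStrategy.play (cs : PassiveCopStrategy G n) (rs : PassiveRobberStrategy G n) :
    ℕ → List (CRConfig V n) × CRConfig V n :=
  crPlay n cs.init rs.init cs.move rs.move

lemma PassiveCopStrategy.play_succ_snd_fst (cs : PassiveCopStrategy G n)
    (rs : PassiveRobberStrategy G n) (t : ℕ) :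
    (cs.play rs (t + 1)).2.1 = cs.move (cs.play rs t).1 (cs.play rs t).2 :=
  rfl

def PassiveCopStrategy.robberTrack (cs : PassiveCopStrategy G n) (rs : PassiveRobberStrategy G n)
    (t : ℕ) : V :=
  (cs.play rs t).2.2

lemma PassiveCopStrategy.robberTrack_adj_or_eq (cs : PassiveCopStrategy G n)
    (rs : PassiveRobberStrategy G n) (t : ℕ) :
    G.Adj (cs.robberTrack rs t) (cs.robberTrack rs (t + 1)) ∨
      cs.robberTrack rs (t + 1) = cs.robberTrack rs t :=
  rs.move_adj (cs.play rs t).1 (cs.move (cs.play rs t).1 (cs.play rs t).2, (cs.play rs t).2.2)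

lemma PassiveCopStrategy.play_fst_map_snd (cs : PassiveCopStrategy G n)
    (rs : PassiveRobberStrategy G n) (t : ℕ) :
    (cs.play rs t).1.map Prod.snd = (List.range t).map (cs.robberTrack rs) :=
  crPlay_fst_map_snd_s7 ..

end Play

def ChangesAt (r : ℕ → V) (t : ℕ) : Prop := r (t + 1) ≠ r t

section Shadow

variable {G : SimpleGraph V} {m : ℕ}

/-- The active robber walking through the successive distinct values of `r`: in round `k` it
moves to the value of `r` right after its `k`-th change (or, if that is not a legal move, to
an arbitrary neighbour). -/
noncomputable def shadowRobber (r : ℕ → V) (hnb : ∀ v, ∃ w, G.Adj v w) :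
    ActiveRobberStrategy G m where
  init _ := r 0
  move h c :=
    let x := r (Nat.nth (ChangesAt r) h.length + 1)
    if G.Adj c.2 x then x else (hnb c.2).choose
  move_adj h c := by
    dsimp only
    split_ifs with hx
    exacts [hx, (hnb c.2).choose_spec]

lemma shadowRobber_move {r : ℕ → V} (hnb : ∀ v, ∃ w, G.Adj v w) {h : List (CRConfig V m)}
    {c : CRConfig V m} (hadj : G.Adj c.2 (r (Nat.nth (ChangesAt r) h.length + 1))) :
    (shadowRobber r hnb).move h c = r (Nat.nth (ChangesAt r) h.length + 1) :=
  if_pos hadj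

namespace ActiveCopStrategy

/-- The play of the active game between `cs` and the robber who makes exactly the moves of a
lazy robber with positions `x :: xs` (latest first), skipping the rounds in which the lazy
robber stays put. -/
noncomputable def shadowPlay (cs : ActiveCopStrategy G m) :
    V → List V → List (CRConfig V m) × CRConfig V m
  | x, [] => ([], (cs.init, x))
  | x, y :: ys =>
      let p := cs.shadowPlay y ys
      if x = y then p else (p.1 ++ [p.2], (cs.move p.1 p.2, x))

lemma shadowPlay_snd_snd (cs : ActiveCopStrategy G m) (x : V) (xs : List V) :
    (cs.shadowPlay x xs).2.2 = x := by
  induction xs generalizing x with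
  | nil => rfl
  | cons y ys ih =>
    simp only [shadowPlay]
    split_ifs with h
    exacts [(ih y).trans h.symm, rfl]

theorem shadowPlay_eq_play (cs : ActiveCopStrategy G m) {r : ℕ → V}
    (hr : ∀ t, G.Adj (r t) (r (t + 1)) ∨ r (t + 1) = r t) (hnb : ∀ v, ∃ w, G.Adj v w)
    (t : ℕ) :
    cs.shadowPlay (r t) ((List.range t).map r).reverse =
      cs.play (shadowRobber r hnb) (Nat.count (ChangesAt r) t) := by
  induction t with
  | zero => rfl
  | succ t ih =>
    have htrail :
        ((List.range (t + 1)).map r).reverse = r t :: ((List.range t).map r).reverse := by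
      simp [List.range_succ]
    rw [htrail, shadowPlay]
    by_cases hstay : r (t + 1) = r t
    · rw [if_pos hstay, Nat.count_succ_eq_count_iff.2 (not_not.2 hstay : ¬ChangesAt r t), ih]
    · set k := Nat.count (ChangesAt r) t
      have hlen : (cs.play (shadowRobber r hnb) k).1.length = k := crPlay_fst_length_s7 ..
      have hrob : (cs.play (shadowRobber r hnb) k).2.2 = r t := by
        rw [← ih, shadowPlay_snd_snd]
      have hnth : Nat.nth (ChangesAt r) k = t := Nat.nth_count hstay
      have hadj : G.Adj (r t) (r (t + 1)) := (hr t).resolve_right hstay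
      rw [if_neg hstay, Nat.count_succ_eq_succ_count_iff.2 hstay, ih, play_succ,
        shadowRobber_move hnb (by rw [hlen, hnth]; exact hrob ▸ hadj), hlen, hnth]

noncomputable def withChaser (cs : ActiveCopStrategy G m) (v₀ : V) :
    PassiveCopStrategy G (m + 1) where
  init := Fin.snoc cs.init v₀
  move h c i :=
    let p := cs.shadowPlay c.2 (h.map Prod.snd).reverse
    G.stepToward (c.1 i) (Fin.snoc (α := fun _ ↦ V) (cs.move p.1 p.2) c.2 i)
  move_adj _ _ _ := stepToward_adj_or_eq _ _

lemma withChaser_move_castSucc (cs : ActiveCopStrategy G m) (v₀ : V)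
    (h : List (CRConfig V (m + 1))) (c : CRConfig V (m + 1)) (i : Fin m) :
    (cs.withChaser v₀).move h c i.castSucc =
      G.stepToward (c.1 i.castSucc) (cs.move (cs.shadowPlay c.2 (h.map Prod.snd).reverse).1
        (cs.shadowPlay c.2 (h.map Prod.snd).reverse).2 i) := by
  simp [withChaser]

lemma withChaser_move_last (cs : ActiveCopStrategy G m) (v₀ : V)
    (h : List (CRConfig V (m + 1))) (c : CRConfig V (m + 1)) :
    (cs.withChaser v₀).move h c (Fin.last m) = G.stepToward (c.1 (Fin.last m)) c.2 := by
  simp [withChaser]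

variable (cs : ActiveCopStrategy G m) (v₀ : V) (rs : PassiveRobberStrategy G (m + 1))

local notation "P" => PassiveCopStrategy.play (withChaser cs v₀) rs
local notation "R" => PassiveCopStrategy.robberTrack (withChaser cs v₀) rs

lemma withChaser_captures_of_finite (hconn : G.Connected) (hfin : {t | ChangesAt R t}.Finite) :
    PassiveCapture (cs.withChaser v₀) rs := by
  obtain ⟨T, hT⟩ := hfin.bddAbove
  have hconst : ∀ t ≥ T + 1, R t = R (T + 1) := by
    intro t ht
    induction t, ht using Nat.le_induction with
    | base => rfl
    | succ t ht ih =>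
      rw [← ih]
      by_contra h
      have := hT h
      omega
  obtain ⟨t, ht, hcatch⟩ := hconn.exists_eq_of_stepToward (c := fun t => (P t).2.1 (Fin.last m))
    (x := R (T + 1)) (T := T + 1) (fun t ht => by
      show (cs.withChaser v₀).move (P t).1 (P t).2 (Fin.last m) = _
      rw [withChaser_move_last]
      exact congrArg _ (hconst t ht))
  exact ⟨t, Or.inl ⟨Fin.last m, hcatch.trans (hconst t ht).symm⟩⟩

lemma withChaser_shadowPlay (hnb : ∀ v, ∃ w, G.Adj v w) (t : ℕ) :
    cs.shadowPlay (P t).2.2 (((P t).1.map Prod.snd).reverse) =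
      cs.play (shadowRobber R hnb) (Nat.count (ChangesAt R) t) := by
  rw [PassiveCopStrategy.play_fst_map_snd]
  exact cs.shadowPlay_eq_play (PassiveCopStrategy.robberTrack_adj_or_eq _ _) hnb t

lemma withChaser_play_succ_castSucc (hnb : ∀ v, ∃ w, G.Adj v w) (t : ℕ) (i : Fin m) :
    (P (t + 1)).2.1 i.castSucc =
      (cs.play (shadowRobber R hnb) (Nat.count (ChangesAt R) t + 1)).2.1 i := by
  set Q := cs.play (shadowRobber R hnb)
  have step : ∀ t, ((P t).2.1 i.castSucc = (Q (Nat.count (ChangesAt R) t)).2.1 i ∨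
      (P t).2.1 i.castSucc = (Q (Nat.count (ChangesAt R) t + 1)).2.1 i) →
      (P (t + 1)).2.1 i.castSucc = (Q (Nat.count (ChangesAt R) t + 1)).2.1 i := by
    intro t ht
    rw [PassiveCopStrategy.play_succ_snd_fst, withChaser_move_castSucc, withChaser_shadowPlay]
    refine stepToward_eq_of_adj_or_eq ?_
    rcases ht with ht | ht
    · exact Or.inl (ht ▸ cs.move_adj _ _ i)
    · exact Or.inr ht.symm
  induction t with
  | zero =>
    refine step 0 (Or.inl ?_)
    rw [Nat.count_zero]
    exact Fin.snoc_castSucc (α := fun _ ↦ V) ..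
  | succ t ih =>
    refine step (t + 1) ?_
    rw [Nat.count_succ]
    split_ifs
    · exact Or.inl ih
    · exact Or.inr ih

lemma withChaser_captures_of_infinite (hnb : ∀ v, ∃ w, G.Adj v w)
    (hcs : ∀ rs : ActiveRobberStrategy G m, ActiveCapture cs rs)
    (hinf : {t | ChangesAt R t}.Infinite) :
    PassiveCapture (cs.withChaser v₀) rs := by
  have hrobber :
      ∀ t, (cs.play (shadowRobber R hnb) (Nat.count (ChangesAt R) t)).2.2 = R t := by
    intro t
    rw [← withChaser_shadowPlay, shadowPlay_snd_snd]
    rfl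
  have hcount : ∀ k, Nat.count (ChangesAt R) (Nat.nth (ChangesAt R) k) = k :=
    Nat.count_nth_of_infinite hinf
  obtain ⟨k, ⟨i, hk⟩ | ⟨i, hk⟩⟩ := hcs (shadowRobber R hnb)
  · change (cs.play (shadowRobber R hnb) k).2.1 i = (cs.play (shadowRobber R hnb) k).2.2
      at hk
    cases k with
    | zero =>
      exact ⟨0, Or.inl ⟨i.castSucc, (Fin.snoc_castSucc (α := fun _ ↦ V) ..).trans hk⟩⟩
    | succ k =>
      have hcount_succ : Nat.count (ChangesAt R) (Nat.nth (ChangesAt R) k + 1) = k + 1 := by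
        rw [Nat.count_succ_eq_succ_count_iff.2 (Nat.nth_mem_of_infinite hinf k), hcount]
      refine ⟨Nat.nth (ChangesAt R) k + 1, Or.inl ⟨i.castSucc, ?_⟩⟩
      show (P (Nat.nth (ChangesAt R) k + 1)).2.1 i.castSucc = R (Nat.nth (ChangesAt R) k + 1)
      rw [withChaser_play_succ_castSucc cs v₀ rs hnb, hcount, hk, ← hcount_succ, hrobber]
  · refine ⟨Nat.nth (ChangesAt R) k, Or.inr ⟨i.castSucc, ?_⟩⟩
    show (P (Nat.nth (ChangesAt R) k + 1)).2.1 i.castSucc = R (Nat.nth (ChangesAt R) k)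
    rw [withChaser_play_succ_castSucc cs v₀ rs hnb, hcount, ← hrobber, hcount]
    exact hk

end ActiveCopStrategy

end Shadow

theorem SimpleGraph.Connected.passiveCopsWin_succ {G : SimpleGraph V} {m : ℕ}
    (hconn : G.Connected) (h : ActiveCopsWin G m) : PassiveCopsWin G (m + 1) := by
  obtain ⟨cs, hcs⟩ := h
  set v₀ := hconn.nonempty.some
  refine ⟨cs.withChaser v₀, fun rs => ?_⟩
  by_cases hinf : {t | ChangesAt ((cs.withChaser v₀).robberTrack rs) t}.Infinite
  · obtain ⟨t, ht⟩ := hinf.nonempty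
    have : Nontrivial V := ⟨⟨_, _, ht⟩⟩
    exact cs.withChaser_captures_of_infinite v₀ rs hconn.preconnected.exists_adj_of_nontrivial
      hcs hinf
  · exact cs.withChaser_captures_of_finite v₀ rs hconn (Set.not_infinite.1 hinf)

lemma SimpleGraph.exists_activeCopsWin [Fintype V] (G : SimpleGraph V) :
    ∃ n, ActiveCopsWin G n := by
  by_cases hnb : ∀ v, ∃ w, G.Adj v w
  · choose nbr hnbr using hnb
    refine ⟨Fintype.card V, ⟨(Fintype.equivFin V).symm, fun _ c i => nbr (c.1 i),
      fun _ _ _ => hnbr _⟩, fun rs => ?_⟩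
    exact ⟨0, Or.inl ⟨Fintype.equivFin V (rs.init (Fintype.equivFin V).symm),
      Equiv.symm_apply_apply _ _⟩⟩
  · obtain ⟨v, hv⟩ := not_forall.1 hnb
    exact ⟨0, ⟨Fin.elim0, fun _ _ i => i.elim0, fun _ _ i => i.elim0⟩,
      fun rs => (hv ⟨_, rs.move_adj [] (Fin.elim0, v)⟩).elim⟩

/-- For every finite connected graph `G`, `cop(G) ≤ acop(G) + 1`. -/
theorem copNumber_le_acop_add_one {V : Type u} [Fintype V]
    (G : SimpleGraph V) (hconn : G.Connected) :
    copNumber G ≤ acop G + 1 :=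
  Nat.sInf_le (hconn.passiveCopsWin_succ (Nat.sInf_mem G.exists_activeCopsWin))
end Aux
end
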